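/- arXiv:1808.04846 — 7 statements merged into one kernel-verified Lean document; each statement's English description precedes it below -/
import Mathlib

section
/- Let A be the 4×4 matrix with rows (-b/K, -α₁, -α₂, -α₃), (α₁, 0, 0, -η₁), (α₂, 0, 0, -η₂), (α₃, η₁, η₂, 0), where b, K, α₁, α₂, α₃, η₁, η₂ are real numbers. Then det A = (η₁α₂ - η₂α₁)². -/
/-!
Write the matrix as `S + single 0 0 (-b/K)` with `S` skew-symmetric. The determinant is affine
in the corner entry, with slope the determinant of the lower-right `3 × 3` minor of `S`; that minor
is skew-symmetric of odd size, so its determinant vanishes. What remains is `det S`, the square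
of the Pfaffian `α₁η₂ - α₂η₁` of `S`.
-/

open Matrix

namespace Matrix

variable {R : Type*} [CommRing R]

theorem det_eq_zero_of_transpose_eq_neg [IsAddTorsionFree R] {n : Type*} [Fintype n]
    [DecidableEq n] {A : Matrix n n R} (hA : Aᵀ = -A) (hn : Odd (Fintype.card n)) :
    A.det = 0 := by
  have h : A.det = -A.det := by
    simpa only [det_transpose, det_neg, hn.neg_one_pow, neg_one_mul] using congrArg det hA
  exact self_eq_neg.mp h

theorem det_fin_four_of_transpose_eq_neg [IsAddTorsionFree R] {A : Matrix (Fin 4) (Fin 4) R}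
    (hA : Aᵀ = -A) :
    A.det = (A 0 1 * A 2 3 - A 0 2 * A 1 3 + A 0 3 * A 1 2) ^ 2 := by
  have hanti : ∀ i j, A j i = -A i j := fun i j => congrFun (congrFun hA i) j
  have hdiag : ∀ i, A i i = 0 := fun i => self_eq_neg.mp (hanti i i)
  have hA_eq : A = !![0, A 0 1, A 0 2, A 0 3;
                      -A 0 1, 0, A 1 2, A 1 3;
                      -A 0 2, -A 1 2, 0, A 2 3;
                      -A 0 3, -A 1 3, -A 2 3, 0] := by
    ext i j
    fin_cases i <;> fin_cases j <;> simp [hdiag] <;> exact hanti _ _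
  rw [hA_eq]
  simp [det_succ_row_zero, Fin.sum_univ_succ, Fin.succAbove]
  ring

theorem det_add_single_zero_zero {n : ℕ} (A : Matrix (Fin (n + 1)) (Fin (n + 1)) R) (c : R) :
    (A + single 0 0 c).det = A.det + c * (A.submatrix Fin.succ Fin.succ).det := by
  have hrow : A + single 0 0 c = A.updateRow 0 (A 0 + c • Pi.single 0 1) := by
    ext i j
    by_cases hi : i = 0 <;> by_cases hj : j = 0 <;> simp [hi, hj, eq_comm]
  rw [hrow, det_updateRow_add, updateRow_eq_self, det_updateRow_smul, ← adjugate_apply,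
    adjugate_fin_succ_eq_det_submatrix]
  simp

end Matrix

theorem det_coinfection_matrix (b K α₁ α₂ α₃ η₁ η₂ : ℝ) :
    Matrix.det !![-b/K, -α₁, -α₂, -α₃;
                  α₁, 0, 0, -η₁;
                  α₂, 0, 0, -η₂;
                  α₃, η₁, η₂, 0] = (η₁ * α₂ - η₂ * α₁) ^ 2 := by
  set S : Matrix (Fin 4) (Fin 4) ℝ := !![0, -α₁, -α₂, -α₃;
                                          α₁, 0, 0, -η₁;
                                          α₂, 0, 0, -η₂;
                                          α₃, η₁, η₂, 0]
  have hS : Sᵀ = -S := by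
    ext i j
    fin_cases i <;> fin_cases j <;> simp [S]
  have hsplit : !![-b/K, -α₁, -α₂, -α₃; α₁, 0, 0, -η₁; α₂, 0, 0, -η₂; α₃, η₁, η₂, 0] =
      S + single 0 0 (-b/K) := by
    ext i j
    fin_cases i <;> fin_cases j <;> simp [S]
  have hminor : (S.submatrix Fin.succ Fin.succ).det = 0 :=
    det_eq_zero_of_transpose_eq_neg
      (by rw [transpose_submatrix, hS, submatrix_neg]; rfl) (by decide)
  rw [hsplit, det_add_single_zero_zero, hminor, det_fin_four_of_transpose_eq_neg hS]
  simp only [S, of_apply, cons_val', cons_val_zero, cons_val_one, cons_val, cons_val_fin_one]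
  ring
end

section
/- Let M ∈ ℝⁿˣⁿ be positive semi-definite in the sense of quadratic forms (xᵀMx ≥ 0 for all x) and q ∈ ℝⁿ. Then the solution set of the linear complementarity problem LCP(M,q), i.e. {z ∈ ℝⁿ : z ≥ 0, q + Mz ≥ 0, zᵀ(q + Mz) = 0}, is convex. -/
/-!
If `x` and `y` both solve `LCP(M, q)`, the cross products `x ⬝ᵥ (q + M y)` and
`y ⬝ᵥ (q + M x)` are nonnegative, while their sum equals `-(x - y) ⬝ᵥ M (x - y) ≤ 0`.
Hence both vanish, and then `q + M z` is affine in `z`, so the complementarity product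
of `a x + b y` expands to `a² · 0 + a b · (0 + 0) + b² · 0`.
-/

open Matrix

namespace LCP

variable {ι R : Type*} [Fintype ι]

section CommRing

variable [CommRing R]

theorem add_mulVec_combo (M : Matrix ι ι R) (q x y : ι → R) {a b : R} (hab : a + b = 1) :
    q + M *ᵥ (a • x + b • y) = a • (q + M *ᵥ x) + b • (q + M *ᵥ y) := by
  conv_lhs => rw [← Convex.combo_self hab q]
  rw [mulVec_add, mulVec_smul, mulVec_smul]
  module

theorem cross_add_cross_eq (M : Matrix ι ι R) (q x y : ι → R) :
    x ⬝ᵥ (q + M *ᵥ y) + y ⬝ᵥ (q + M *ᵥ x) =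
      x ⬝ᵥ (q + M *ᵥ x) + y ⬝ᵥ (q + M *ᵥ y) - (x - y) ⬝ᵥ M *ᵥ (x - y) := by
  simp only [dotProduct_add, mulVec_sub, dotProduct_sub, sub_dotProduct]
  ring

end CommRing

variable [CommRing R] [PartialOrder R] [IsOrderedRing R]

def solutionSet (M : Matrix ι ι R) (q : ι → R) : Set (ι → R) :=
  {z | (∀ i, 0 ≤ z i) ∧ (∀ i, 0 ≤ q i + (M *ᵥ z) i) ∧ z ⬝ᵥ (q + M *ᵥ z) = 0}

variable {M : Matrix ι ι R} {q x y : ι → R}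

theorem cross_eq_zero (hM : ∀ v, 0 ≤ v ⬝ᵥ M *ᵥ v) (hx : x ∈ solutionSet M q)
    (hy : y ∈ solutionSet M q) :
    x ⬝ᵥ (q + M *ᵥ y) = 0 ∧ y ⬝ᵥ (q + M *ᵥ x) = 0 := by
  obtain ⟨hx_nonneg, hwx_nonneg, hx_compl⟩ := hx
  obtain ⟨hy_nonneg, hwy_nonneg, hy_compl⟩ := hy
  have hxy : 0 ≤ x ⬝ᵥ (q + M *ᵥ y) := dotProduct_nonneg_of_nonneg hx_nonneg hwy_nonneg
  have hyx : 0 ≤ y ⬝ᵥ (q + M *ᵥ x) := dotProduct_nonneg_of_nonneg hy_nonneg hwx_nonneg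
  refine (add_eq_zero_iff_of_nonneg hxy hyx).1 (le_antisymm ?_ (add_nonneg hxy hyx))
  rw [cross_add_cross_eq, hx_compl, hy_compl, zero_add, zero_sub, neg_nonpos]
  exact hM (x - y)

theorem convex_solutionSet (hM : ∀ v, 0 ≤ v ⬝ᵥ M *ᵥ v) : Convex R (solutionSet M q) := by
  intro x hx y hy a b ha hb hab
  obtain ⟨hxy, hyx⟩ := cross_eq_zero hM hx hy
  obtain ⟨hx_nonneg, hwx_nonneg, hx_compl⟩ := hx
  obtain ⟨hy_nonneg, hwy_nonneg, hy_compl⟩ := hy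
  refine ⟨fun i => ?_, fun i => ?_, ?_⟩
  · exact add_nonneg (mul_nonneg ha (hx_nonneg i)) (mul_nonneg hb (hy_nonneg i))
  · rw [← Pi.add_apply q, add_mulVec_combo M q x y hab]
    exact add_nonneg (mul_nonneg ha (hwx_nonneg i)) (mul_nonneg hb (hwy_nonneg i))
  · rw [add_mulVec_combo M q x y hab, add_dotProduct, smul_dotProduct, smul_dotProduct,
      dotProduct_add, dotProduct_add, dotProduct_smul, dotProduct_smul, dotProduct_smul,
      dotProduct_smul, hx_compl, hy_compl, hxy, hyx]
    simp only [smul_zero, add_zero]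

end LCP

open Matrix in
theorem lcp_solution_set_convex (n : ℕ) (M : Matrix (Fin n) (Fin n) ℝ) (q : Fin n → ℝ)
    (hM : ∀ x : Fin n → ℝ, 0 ≤ x ⬝ᵥ M.mulVec x) :
    Convex ℝ {z : Fin n → ℝ |
      (∀ i, 0 ≤ z i) ∧ (∀ i, 0 ≤ q i + M.mulVec z i) ∧
      z ⬝ᵥ (q + M.mulVec z) = 0} :=
  LCP.convex_solutionSet hM
end

section
/- Assume b, K, μᵢ, αᵢ, ηᵢ > 0 with σ₁ < σ₂ where σᵢ = μᵢ/αᵢ. If Δ := η₁α₂ - η₂α₁ = 0, then the linear system AY = q (where A and q are as in the coinfection model) has no solution; equivalently, the interior equilibrium set is empty. -/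
theorem mul_eq_mul_of_sub_eq_of_sub_eq {R : Type*} [CommRing R] {a₁ a₂ e₁ e₂ m₁ m₂ y z : R}
    (hΔ : e₁ * a₂ - e₂ * a₁ = 0) (h₁ : a₁ * y - e₁ * z = m₁) (h₂ : a₂ * y - e₂ * z = m₂) :
    m₁ * a₂ = m₂ * a₁ := by
  linear_combination a₁ * h₂ - a₂ * h₁ - z * hΔ

theorem no_interior_equilibrium_when_delta_zero_general
    (b K μ₀ μ₁ μ₂ μ₃ α₁ α₂ α₃ η₁ η₂ : ℝ)
    (hα₁ : 0 < α₁) (hα₂ : 0 < α₂)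
    (hσ : μ₁ / α₁ < μ₂ / α₂)
    (hΔ : η₁ * α₂ - η₂ * α₁ = 0) :
    ¬ ∃ Y₀ Y₁ Y₂ Y₃ : ℝ,
      -(b / K) * Y₀ - α₁ * Y₁ - α₂ * Y₂ - α₃ * Y₃ = -b + μ₀ ∧
      α₁ * Y₀ - η₁ * Y₃ = μ₁ ∧
      α₂ * Y₀ - η₂ * Y₃ = μ₂ ∧
      α₃ * Y₀ + η₁ * Y₁ + η₂ * Y₂ = μ₃ := by
  rintro ⟨Y₀, -, -, Y₃, -, h₁, h₂, -⟩
  have hσ_eq : μ₁ / α₁ = μ₂ / α₂ :=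
    (div_eq_div_iff hα₁.ne' hα₂.ne').mpr (mul_eq_mul_of_sub_eq_of_sub_eq hΔ h₁ h₂)
  exact hσ.ne hσ_eq

theorem no_interior_equilibrium_when_delta_zero
    (b K μ₀ μ₁ μ₂ μ₃ α₁ α₂ α₃ η₁ η₂ : ℝ)
    (hb : 0 < b) (hK : 0 < K) (hμ₀ : 0 < μ₀) (hμ₁ : 0 < μ₁) (hμ₂ : 0 < μ₂) (hμ₃ : 0 < μ₃)
    (hα₁ : 0 < α₁) (hα₂ : 0 < α₂) (hα₃ : 0 < α₃) (hη₁ : 0 < η₁) (hη₂ : 0 < η₂)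
    (hσ : μ₁ / α₁ < μ₂ / α₂)
    (hΔ : η₁ * α₂ - η₂ * α₁ = 0) :
    ¬ ∃ Y₀ Y₁ Y₂ Y₃ : ℝ,
      -(b / K) * Y₀ - α₁ * Y₁ - α₂ * Y₂ - α₃ * Y₃ = -b + μ₀ ∧
      α₁ * Y₀ - η₁ * Y₃ = μ₁ ∧
      α₂ * Y₀ - η₂ * Y₃ = μ₂ ∧
      α₃ * Y₀ + η₁ * Y₁ + η₂ * Y₂ = μ₃ :=
  no_interior_equilibrium_when_delta_zero_general b K μ₀ μ₁ μ₂ μ₃ α₁ α₂ α₃ η₁ η₂ hα₁ hα₂ hσ hΔ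
end

section
/- Let h : [0,∞) → ℝ be twice continuously differentiable with h ∈ L^q([0,∞)) for some q ≥ 1 and with h' and h'' bounded on [0,∞). Then h ∈ L^{2q} would follow and moreover lim_{t→∞} h(t) = 0 and lim_{t→∞} h'(t) = 0. -/
/-!
Since `h'` is bounded, `h` is uniformly continuous, and a uniformly continuous function with
`∫ |h| ^ q < ∞` tends to `0`: otherwise `|h| ≥ ε / 2` on intervals of a fixed length
arbitrarily far out, which the tails of the integral cannot afford.

For the `L^{2q}` bound, differentiate `h · φ(h')` with `φ x = x |x| ^ (2q - 2)`, whose derivative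
is `(2q - 1) |x| ^ (2q - 2)`:
`∫₀ᵀ |h'| ^ 2q = [h φ(h')]₀ᵀ - (2q - 1) ∫₀ᵀ h |h'| ^ (2q - 2) h''`.
The boundary term is bounded because `h` and `h'` are, and a Young-type inequality bounds the last
integrand by `C |h| ^ q + |h'| ^ 2q / 2`, so `∫₀ᵀ |h'| ^ 2q` is bounded uniformly in `T`.
Finally `h'` is uniformly continuous (as `h''` is bounded) and lies in `L^{2q}`, so `h' → 0` by
the first argument.
-/

open MeasureTheory Filter Set Topology

lemma hasDerivAt_mul_abs_rpow {p : ℝ} (hp : 0 ≤ p) (x : ℝ) :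
    HasDerivAt (fun x : ℝ => x * |x| ^ p) ((p + 1) * |x| ^ p) x := by
  have hne : ∀ y ≠ 0, HasDerivAt (fun x : ℝ => x * |x| ^ p) ((p + 1) * |y| ^ p) y := by
    intro y hy
    refine ((hasDerivAt_id y).mul
      ((hasDerivAt_abs hy).rpow_const (p := p) (Or.inl (abs_ne_zero.2 hy)))).congr_deriv ?_
    rw [Real.rpow_sub_one (abs_ne_zero.2 hy), id]
    field_simp
    linear_combination p * self_mul_sign y
  rcases eq_or_ne x 0 with rfl | hx
  · have hcont : Continuous fun x : ℝ => |x| ^ p :=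
      (Real.continuous_rpow_const hp).comp continuous_abs
    exact hasDerivAt_of_hasDerivAt_of_ne hne (continuous_id.mul hcont).continuousAt
      (continuous_const.mul hcont).continuousAt
  · exact hne x hx

lemma mul_mul_abs_rpow {p : ℝ} (hp : 0 ≤ p) (x : ℝ) : x * (x * |x| ^ p) = |x| ^ (p + 2) := by
  rw [Real.rpow_add' (abs_nonneg x) (by linarith), ← mul_assoc, ← abs_mul_abs_self,
    Real.rpow_two]
  ring

lemma abs_mul_abs_rpow {p : ℝ} (hp : 0 ≤ p) (x : ℝ) : |x * |x| ^ p| = |x| ^ (p + 1) := by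
  rw [abs_mul, abs_of_nonneg (Real.rpow_nonneg (abs_nonneg x) p),
    Real.rpow_add_one' (abs_nonneg x) (by linarith), mul_comm]

lemma mul_rpow_sub_one_le {x c q : ℝ} (hx : 0 ≤ x) (hc : 0 ≤ c) (hq : 1 ≤ q) :
    x * c ^ (q - 1) ≤ 2 ^ (q - 1) * x ^ q + c ^ q / 2 := by
  rcases le_total c (2 * x) with hcx | hxc
  · have : x * c ^ (q - 1) ≤ 2 ^ (q - 1) * x ^ q :=
      calc x * c ^ (q - 1) ≤ x * (2 * x) ^ (q - 1) := by gcongr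
        _ = 2 ^ (q - 1) * x ^ q := by
          rw [Real.mul_rpow (by norm_num) hx, mul_left_comm,
            ← Real.rpow_one_add' hx (by linarith)]
          ring_nf
    have : 0 ≤ c ^ q / 2 := by positivity
    linarith
  · have : x * c ^ (q - 1) ≤ c ^ q / 2 :=
      calc x * c ^ (q - 1) ≤ c / 2 * c ^ (q - 1) := by gcongr; linarith
        _ = c ^ q / 2 := by
          rw [div_mul_eq_mul_div, ← Real.rpow_one_add' hc (by linarith)]
          ring_nf
    have : 0 ≤ 2 ^ (q - 1) * x ^ q := by positivity
    linarith

lemma Convex.uniformContinuousOn_of_norm_hasDerivWithin_le {E : Type*} [NormedAddCommGroup E]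
    [NormedSpace ℝ E] {f f' : ℝ → E} {s : Set ℝ} {M : ℝ} (hs : Convex ℝ s)
    (hf : ∀ t ∈ s, HasDerivWithinAt f (f' t) s t) (hM : ∀ t ∈ s, ‖f' t‖ ≤ M) :
    UniformContinuousOn f s :=
  (hs.lipschitzOnWith_of_nnnorm_hasDerivWithin_le (C := M.toNNReal) hf fun t ht =>
    (hM t ht).trans (Real.le_coe_toNNReal M)).uniformContinuousOn

lemma tendsto_zero_of_uniformContinuousOn_of_integrableOn_norm_rpow {E : Type*}
    [NormedAddCommGroup E] {f : ℝ → E} {a q : ℝ} (hq : 0 ≤ q)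
    (hf : UniformContinuousOn f (Ici a)) (hint : IntegrableOn (fun t => ‖f t‖ ^ q) (Ici a)) :
    Tendsto f atTop (𝓝 0) := by
  rw [Metric.tendsto_atTop]
  intro ε hε
  obtain ⟨δ, hδ, hfδ⟩ := Metric.uniformContinuousOn_iff.1 hf (ε / 2) (by positivity)
  have htail : ∀ᶠ A in atTop, ∫ s in Ioi A, ‖f s‖ ^ q < δ * (ε / 2) ^ q :=
    (tendsto_integral_Ioi_zero tendsto_id).eventually (gt_mem_nhds (by positivity))
  obtain ⟨A, hA, haA⟩ := (htail.and (eventually_ge_atTop a)).exists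
  refine ⟨A, fun t ht => ?_⟩
  rw [dist_zero_right]
  by_contra! hft
  have hta : t ∈ Ici a := haA.trans ht
  -- `‖f‖ > ε / 2` on `(t, t + δ)`, which costs `δ * (ε / 2) ^ q` of the tail integral
  have hlower : ∀ s ∈ Ioo t (t + δ), (ε / 2) ^ q ≤ ‖f s‖ ^ q := by
    intro s hs
    have hsa : s ∈ Ici a := hta.trans hs.1.le
    have hdist : dist (f s) (f t) < ε / 2 :=
      hfδ s hsa t hta (by rw [Real.dist_eq, abs_of_pos (sub_pos.2 hs.1)]; linarith [hs.2])
    have := norm_sub_norm_le (f t) (f s)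
    rw [← dist_eq_norm, dist_comm] at this
    gcongr
    linarith
  have hsub : Ioo t (t + δ) ⊆ Ioi A := fun s hs => ht.trans_lt hs.1
  have hintA : IntegrableOn (fun s => ‖f s‖ ^ q) (Ioi A) :=
    hint.mono_set (Ioi_subset_Ici haA)
  have hmass : δ * (ε / 2) ^ q ≤ ∫ s in Ioo t (t + δ), ‖f s‖ ^ q := by
    simpa [Real.volume_real_Ioo_of_le (by linarith : t ≤ t + δ), mul_comm] using
      setIntegral_ge_of_const_le_real measurableSet_Ioo (by simp) hlower (hintA.mono_set hsub)
  have hmono : ∫ s in Ioo t (t + δ), ‖f s‖ ^ q ≤ ∫ s in Ioi A, ‖f s‖ ^ q :=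
    setIntegral_mono_set hintA (Eventually.of_forall fun s => by positivity) hsub.eventuallyLE
  linarith

lemma ContinuousOn.exists_forall_Ici_norm_le_of_tendsto {E : Type*} [NormedAddCommGroup E]
    {f : ℝ → E} {a : ℝ} {c : E} (hf : ContinuousOn f (Ici a))
    (hlim : Tendsto f atTop (𝓝 c)) :
    ∃ K, ∀ t ∈ Ici a, ‖f t‖ ≤ K := by
  obtain ⟨T, hT⟩ := eventually_atTop.1 <|
    hlim.norm.eventually (eventually_le_nhds (lt_add_one ‖c‖))
  obtain ⟨C, hC⟩ := (isCompact_Icc (a := a) (b := T)).exists_bound_of_continuousOn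
    (hf.mono Icc_subset_Ici_self)
  refine ⟨max C (‖c‖ + 1), fun t ht => ?_⟩
  rcases le_total t T with htT | hTt
  · exact (hC t ⟨ht, htT⟩).trans (le_max_left _ _)
  · exact (hT t hTt).trans (le_max_right _ _)

lemma abs_mul_mul_abs_rpow_mul_le {u v w M q : ℝ} (hq : 1 ≤ q) (hw : |w| ≤ M) :
    |u * ((2 * q - 1) * |v| ^ (2 * q - 2) * w)|
      ≤ 2 ^ (q - 1) * ((2 * q - 1) * M) ^ q * |u| ^ q + |v| ^ (2 * q) / 2 := by
  have hM : 0 ≤ M := (abs_nonneg w).trans hw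
  have hD : 0 ≤ (2 * q - 1) * M := mul_nonneg (by linarith) hM
  calc |u * ((2 * q - 1) * |v| ^ (2 * q - 2) * w)|
      = (2 * q - 1) * |w| * |u| * (|v| ^ (2 : ℝ)) ^ (q - 1) := by
        rw [← Real.rpow_mul (abs_nonneg v), abs_mul, abs_mul, abs_mul,
          abs_of_nonneg (by linarith : (0 : ℝ) ≤ 2 * q - 1),
          abs_of_nonneg (Real.rpow_nonneg (abs_nonneg v) _)]
        ring_nf
    _ ≤ (2 * q - 1) * M * |u| * (|v| ^ (2 : ℝ)) ^ (q - 1) := by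
        gcongr
        linarith
    _ ≤ 2 ^ (q - 1) * ((2 * q - 1) * M * |u|) ^ q + (|v| ^ (2 : ℝ)) ^ q / 2 :=
        mul_rpow_sub_one_le (mul_nonneg hD (abs_nonneg u)) (by positivity) hq
    _ = 2 ^ (q - 1) * ((2 * q - 1) * M) ^ q * |u| ^ q + |v| ^ (2 * q) / 2 := by
        rw [Real.mul_rpow hD (abs_nonneg u), ← Real.rpow_mul (abs_nonneg v)]
        ring

section

variable {f f' f'' : ℝ → ℝ} {a q : ℝ}

lemma integrableOn_Ioc_abs_rpow {r : ℝ} (hr : 0 ≤ r) (hf : ContinuousOn f (Ici a)) (T : ℝ) :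
    IntegrableOn (fun t => |f t| ^ r) (Ioc a T) :=
  ((hf.mono Icc_subset_Ici_self).abs.rpow_const fun _ _ => Or.inr hr).integrableOn_Icc.mono_set
    Ioc_subset_Icc_self

lemma integral_abs_deriv_rpow_two_mul_eq (hq : 1 ≤ q)
    (hd1 : ∀ t ∈ Ici a, HasDerivAt f (f' t) t) (hd2 : ∀ t ∈ Ici a, HasDerivAt f' (f'' t) t)
    (hcont : ContinuousOn f'' (Ici a)) {T : ℝ} (hT : a ≤ T) :
    ∫ t in a..T, |f' t| ^ (2 * q)
      = f T * (f' T * |f' T| ^ (2 * q - 2)) - f a * (f' a * |f' a| ^ (2 * q - 2))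
        - ∫ t in a..T, f t * ((2 * q - 1) * |f' t| ^ (2 * q - 2) * f'' t) := by
  have hp : 0 ≤ 2 * q - 2 := by linarith
  have hsub : Icc a T ⊆ Ici a := Icc_subset_Ici_self
  have hf : ContinuousOn f (Icc a T) := fun t ht =>
    (hd1 t (hsub ht)).continuousAt.continuousWithinAt
  have hf' : ContinuousOn (fun t => |f' t|) (Icc a T) := fun t ht =>
    (hd2 t (hsub ht)).continuousAt.continuousWithinAt.abs
  have hint1 : IntervalIntegrable (fun t => |f' t| ^ (2 * q)) volume a T :=
    (hf'.rpow_const fun _ _ => Or.inr (by linarith)).intervalIntegrable_of_Icc hT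
  have hint2 : IntervalIntegrable (fun t => f t * ((2 * q - 1) * |f' t| ^ (2 * q - 2) * f'' t))
      volume a T :=
    (hf.mul ((continuousOn_const.mul (hf'.rpow_const fun _ _ => Or.inr hp)).mul
      (hcont.mono hsub))).intervalIntegrable_of_Icc hT
  rw [eq_sub_iff_add_eq, ← intervalIntegral.integral_add hint1 hint2]
  refine intervalIntegral.integral_eq_sub_of_hasDerivAt
    (f := fun s => f s * (f' s * |f' s| ^ (2 * q - 2))) (fun t ht => ?_) (hint1.add hint2)
  rw [uIcc_of_le hT] at ht
  refine ((hd1 t (hsub ht)).mul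
    ((hasDerivAt_mul_abs_rpow hp (f' t)).comp t (hd2 t (hsub ht)))).congr_deriv ?_
  rw [Function.comp_apply, mul_mul_abs_rpow hp, show 2 * q - 2 + 2 = 2 * q by ring]
  ring

lemma abs_intervalIntegral_mul_abs_rpow_mul_le (hq : 1 ≤ q) (hf' : ContinuousOn f' (Ici a))
    {M₂ : ℝ} (hM₂ : ∀ t ∈ Ici a, |f'' t| ≤ M₂)
    (hLq : IntegrableOn (fun t => |f t| ^ q) (Ici a)) {T : ℝ} (hT : a ≤ T) :
    |∫ t in a..T, f t * ((2 * q - 1) * |f' t| ^ (2 * q - 2) * f'' t)|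
      ≤ 2 ^ (q - 1) * ((2 * q - 1) * M₂) ^ q * (∫ t in Ici a, |f t| ^ q)
        + (∫ t in a..T, |f' t| ^ (2 * q)) / 2 := by
  set C := 2 ^ (q - 1) * ((2 * q - 1) * M₂) ^ q
  have hC : 0 ≤ C := mul_nonneg (by positivity) <| Real.rpow_nonneg
    (mul_nonneg (by linarith) ((abs_nonneg _).trans (hM₂ a self_mem_Ici))) _
  have hIoc : Ioc a T ⊆ Ici a := Ioc_subset_Icc_self.trans Icc_subset_Ici_self
  have hint1 : IntervalIntegrable (fun t => |f' t| ^ (2 * q)) volume a T :=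
    (intervalIntegrable_iff_integrableOn_Ioc_of_le hT).2
      (integrableOn_Ioc_abs_rpow (by linarith) hf' T)
  have hint2 : IntervalIntegrable (fun t => |f t| ^ q) volume a T :=
    (intervalIntegrable_iff_integrableOn_Ioc_of_le hT).2 (hLq.mono_set hIoc)
  calc _ ≤ ∫ t in a..T, (C * |f t| ^ q + |f' t| ^ (2 * q) / 2) := by
        refine intervalIntegral.norm_integral_le_of_norm_le (E := ℝ) hT
          (Eventually.of_forall fun t ht => ?_) ((hint2.const_mul C).add (hint1.div_const 2))
        exact abs_mul_mul_abs_rpow_mul_le hq (hM₂ t (hIoc ht))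
    _ = C * (∫ t in a..T, |f t| ^ q) + (∫ t in a..T, |f' t| ^ (2 * q)) / 2 := by
        rw [intervalIntegral.integral_add (hint2.const_mul C) (hint1.div_const 2),
          intervalIntegral.integral_const_mul, intervalIntegral.integral_div]
    _ ≤ C * (∫ t in Ici a, |f t| ^ q) + (∫ t in a..T, |f' t| ^ (2 * q)) / 2 := by
        have : ∫ t in Ioc a T, |f t| ^ q ≤ ∫ t in Ici a, |f t| ^ q :=
          setIntegral_mono_set hLq (Eventually.of_forall fun t => by positivity)
            hIoc.eventuallyLE
        rw [intervalIntegral.integral_of_le hT]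
        gcongr

lemma intervalIntegral_abs_deriv_rpow_two_mul_le (hq : 1 ≤ q)
    (hd1 : ∀ t ∈ Ici a, HasDerivAt f (f' t) t) (hd2 : ∀ t ∈ Ici a, HasDerivAt f' (f'' t) t)
    (hcont : ContinuousOn f'' (Ici a)) {K M₁ M₂ : ℝ} (hK : ∀ t ∈ Ici a, |f t| ≤ K)
    (hM₁ : ∀ t ∈ Ici a, |f' t| ≤ M₁) (hM₂ : ∀ t ∈ Ici a, |f'' t| ≤ M₂)
    (hLq : IntegrableOn (fun t => |f t| ^ q) (Ici a)) {T : ℝ} (hT : a ≤ T) :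
    ∫ t in a..T, |f' t| ^ (2 * q)
      ≤ 4 * (K * M₁ ^ (2 * q - 1))
        + 2 * (2 ^ (q - 1) * ((2 * q - 1) * M₂) ^ q * ∫ t in Ici a, |f t| ^ q) := by
  have hboundary :
      ∀ s ∈ Ici a, |f s * (f' s * |f' s| ^ (2 * q - 2))| ≤ K * M₁ ^ (2 * q - 1) := by
    intro s hs
    rw [abs_mul, abs_mul_abs_rpow (by linarith), show 2 * q - 2 + 1 = 2 * q - 1 by ring]
    exact mul_le_mul (hK s hs) (Real.rpow_le_rpow (abs_nonneg _) (hM₁ s hs) (by linarith))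
      (by positivity) ((abs_nonneg _).trans (hK s hs))
  have hT' := abs_le.1 (hboundary T hT)
  have ha' := abs_le.1 (hboundary a self_mem_Ici)
  have hrest := abs_le.1 <| abs_intervalIntegral_mul_abs_rpow_mul_le hq
    (fun t ht => (hd2 t ht).continuousAt.continuousWithinAt) hM₂ hLq hT
  have := integral_abs_deriv_rpow_two_mul_eq hq hd1 hd2 hcont hT
  linarith

lemma integrableOn_abs_deriv_rpow_two_mul (hq : 1 ≤ q)
    (hd1 : ∀ t ∈ Ici a, HasDerivAt f (f' t) t) (hd2 : ∀ t ∈ Ici a, HasDerivAt f' (f'' t) t)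
    (hcont : ContinuousOn f'' (Ici a)) {K M₁ M₂ : ℝ} (hK : ∀ t ∈ Ici a, |f t| ≤ K)
    (hM₁ : ∀ t ∈ Ici a, |f' t| ≤ M₁) (hM₂ : ∀ t ∈ Ici a, |f'' t| ≤ M₂)
    (hLq : IntegrableOn (fun t => |f t| ^ q) (Ici a)) :
    IntegrableOn (fun t => |f' t| ^ (2 * q)) (Ici a) := by
  rw [integrableOn_Ici_iff_integrableOn_Ioi]
  refine integrableOn_Ioi_of_intervalIntegral_norm_bounded _ a
    (integrableOn_Ioc_abs_rpow (by linarith)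
      (fun t ht => (hd2 t ht).continuousAt.continuousWithinAt)) tendsto_id
    ((eventually_ge_atTop a).mono fun T hT => by
      simpa only [id, Real.norm_eq_abs, abs_of_nonneg (Real.rpow_nonneg (abs_nonneg _) _)] using
        intervalIntegral_abs_deriv_rpow_two_mul_le hq hd1 hd2 hcont hK hM₁ hM₂ hLq hT)

end

open MeasureTheory Filter Set in
theorem Lq_bounded_two_derivs_tendsto_zero (h h' h'' : ℝ → ℝ) (q : ℝ) (hq : 1 ≤ q)
    (hd1 : ∀ t ∈ Ici (0:ℝ), HasDerivAt h (h' t) t)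
    (hd2 : ∀ t ∈ Ici (0:ℝ), HasDerivAt h' (h'' t) t)
    (hcont : ContinuousOn h'' (Ici (0:ℝ)))
    (hb1 : ∃ M : ℝ, ∀ t ∈ Ici (0:ℝ), |h' t| ≤ M)
    (hb2 : ∃ M : ℝ, ∀ t ∈ Ici (0:ℝ), |h'' t| ≤ M)
    (hLq : IntegrableOn (fun t => |h t| ^ q) (Ici (0:ℝ))) :
    IntegrableOn (fun t => |h' t| ^ (2 * q)) (Ici (0:ℝ)) ∧
    Tendsto h atTop (nhds 0) ∧ Tendsto h' atTop (nhds 0) := by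
  obtain ⟨M₁, hM₁⟩ := hb1
  obtain ⟨M₂, hM₂⟩ := hb2
  have hh : Tendsto h atTop (𝓝 0) :=
    tendsto_zero_of_uniformContinuousOn_of_integrableOn_norm_rpow (by linarith)
      ((convex_Ici 0).uniformContinuousOn_of_norm_hasDerivWithin_le
        (fun t ht => (hd1 t ht).hasDerivWithinAt) hM₁) hLq
  obtain ⟨K, hK⟩ := ContinuousOn.exists_forall_Ici_norm_le_of_tendsto
    (fun t ht => (hd1 t ht).continuousAt.continuousWithinAt) hh
  have hh'_int := integrableOn_abs_deriv_rpow_two_mul hq hd1 hd2 hcont hK hM₁ hM₂ hLq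
  refine ⟨hh'_int, hh, ?_⟩
  exact tendsto_zero_of_uniformContinuousOn_of_integrableOn_norm_rpow (by linarith)
    ((convex_Ici 0).uniformContinuousOn_of_norm_hasDerivWithin_le
      (fun t ht => (hd2 t ht).hasDerivWithinAt) hM₂) hh'_int
end

section
/- Let Y(t) = (Y₀, Y₁, Y₂, Y₃)(t) be a nonnegative C¹ solution on [0,∞) of the coinfection system Yₖ' = Fₖ(Y)Yₖ with F as in the model, with all parameters positive. Set f(t) = Σᵢ Yᵢ(t) and μ̂ = min{μ₀, μ₁, μ₂, μ₃}. Then f'(t) ≤ bK/4 - μ̂ f(t) for all t, and consequently f(t) ≤ max{f(0), bK/(4μ̂)} for all t ≥ 0. -/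
/-
Adding the four equations, the interaction terms cancel and `f' = b (1 - Y₀/K) Y₀ - Σ μᵢ Yᵢ`;
the logistic term is at most `bK/4`, whence `f' ≤ bK/4 - μ̂ f`. Grönwall's inequality for
`f' ≤ -μ̂ f + bK/4` bounds `f t` by a convex combination of `f 0` and `bK/(4μ̂)`.
-/

open Set

theorem logistic_growth_le {b K : ℝ} (hb : 0 ≤ b) (hK : 0 < K) (y : ℝ) :
    b * (1 - y / K) * y ≤ b * K / 4 := by
  have hsq : b * (1 - y / K) * y = b * K / 4 - b / K * (y - K / 2) ^ 2 := by
    field_simp; ring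
  rw [hsq]
  have : 0 ≤ b / K * (y - K / 2) ^ 2 := by positivity
  linarith

theorem min_mul_add_le_add {μ₀ μ₁ μ₂ μ₃ y₀ y₁ y₂ y₃ : ℝ}
    (h₀ : 0 ≤ y₀) (h₁ : 0 ≤ y₁) (h₂ : 0 ≤ y₂) (h₃ : 0 ≤ y₃) :
    min (min μ₀ μ₁) (min μ₂ μ₃) * (y₀ + y₁ + y₂ + y₃) ≤ μ₀ * y₀ + μ₁ * y₁ + μ₂ * y₂ + μ₃ * y₃ := by
  set μ := min (min μ₀ μ₁) (min μ₂ μ₃)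
  have := mul_le_mul_of_nonneg_right ((min_le_left _ _).trans (min_le_left μ₀ μ₁) : μ ≤ μ₀) h₀
  have := mul_le_mul_of_nonneg_right ((min_le_left _ _).trans (min_le_right μ₀ μ₁) : μ ≤ μ₁) h₁
  have := mul_le_mul_of_nonneg_right ((min_le_right _ _).trans (min_le_left μ₂ μ₃) : μ ≤ μ₂) h₂
  have := mul_le_mul_of_nonneg_right ((min_le_right _ _).trans (min_le_right μ₂ μ₃) : μ ≤ μ₃) h₃
  linarith

theorem gronwallBound_neg_le_max {μ : ℝ} (hμ : 0 < μ) (δ ε : ℝ) {x : ℝ} (hx : 0 ≤ x) :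
    gronwallBound δ (-μ) ε x ≤ max δ (ε / μ) := by
  have he₀ : 0 ≤ Real.exp (-μ * x) := (Real.exp_pos _).le
  have he₁ : Real.exp (-μ * x) ≤ 1 := Real.exp_le_one_iff.mpr (by nlinarith)
  have hconv : gronwallBound δ (-μ) ε x =
      Real.exp (-μ * x) * δ + (1 - Real.exp (-μ * x)) * (ε / μ) := by
    rw [gronwallBound_of_K_ne_0 (neg_ne_zero.mpr hμ.ne')]
    field_simp; ring
  rw [hconv]
  nlinarith [le_max_left δ (ε / μ), le_max_right δ (ε / μ)]

theorem le_max_of_hasDerivAt_le_sub_mul {f f' : ℝ → ℝ} {C μ a : ℝ} (hμ : 0 < μ)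
    (hf : ∀ t ∈ Ici a, HasDerivAt f (f' t) t) (bound : ∀ t ∈ Ici a, f' t ≤ C - μ * f t) :
    ∀ t ∈ Ici a, f t ≤ max (f a) (C / μ) := by
  intro t ht
  have hgronwall := le_gronwallBound_of_liminf_deriv_right_le (K := -μ) (ε := C) (b := t)
    (fun s hs => (hf s hs.1).continuousAt.continuousWithinAt)
    (fun s hs _ hr => (hf s hs.1).hasDerivWithinAt.liminf_right_slope_le hr) le_rfl
    (fun s hs => by linarith [bound s hs.1]) t ⟨ht, le_rfl⟩
  exact hgronwall.trans (gronwallBound_neg_le_max hμ _ _ (sub_nonneg.mpr ht))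

theorem coinfection_field_sum_le {b K μ₀ μ₁ μ₂ μ₃ α₁ α₂ α₃ η₁ η₂ : ℝ} (hb : 0 ≤ b) (hK : 0 < K)
    {y₀ y₁ y₂ y₃ : ℝ} (h₀ : 0 ≤ y₀) (h₁ : 0 ≤ y₁) (h₂ : 0 ≤ y₂) (h₃ : 0 ≤ y₃) :
    (b * (1 - y₀ / K) - α₁ * y₁ - α₂ * y₂ - α₃ * y₃ - μ₀) * y₀
      + (α₁ * y₀ - η₁ * y₃ - μ₁) * y₁
      + (α₂ * y₀ - η₂ * y₃ - μ₂) * y₂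
      + (α₃ * y₀ + η₁ * y₁ + η₂ * y₂ - μ₃) * y₃
      ≤ b * K / 4 - min (min μ₀ μ₁) (min μ₂ μ₃) * (y₀ + y₁ + y₂ + y₃) := by
  have hcancel : (b * (1 - y₀ / K) - α₁ * y₁ - α₂ * y₂ - α₃ * y₃ - μ₀) * y₀
      + (α₁ * y₀ - η₁ * y₃ - μ₁) * y₁
      + (α₂ * y₀ - η₂ * y₃ - μ₂) * y₂
      + (α₃ * y₀ + η₁ * y₁ + η₂ * y₂ - μ₃) * y₃
      = b * (1 - y₀ / K) * y₀ - (μ₀ * y₀ + μ₁ * y₁ + μ₂ * y₂ + μ₃ * y₃) := by ring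
  rw [hcancel]
  linarith [logistic_growth_le hb hK y₀, min_mul_add_le_add (μ₀ := μ₀) (μ₁ := μ₁) (μ₂ := μ₂)
    (μ₃ := μ₃) h₀ h₁ h₂ h₃]

open Set in
theorem total_population_bound_general
    (b K μ₀ μ₁ μ₂ μ₃ α₁ α₂ α₃ η₁ η₂ : ℝ)
    (hb : 0 < b) (hK : 0 < K) (hμ₀ : 0 < μ₀) (hμ₁ : 0 < μ₁) (hμ₂ : 0 < μ₂) (hμ₃ : 0 < μ₃)
    (Y₀ Y₁ Y₂ Y₃ : ℝ → ℝ)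
    (hnn : ∀ t ∈ Ici (0:ℝ), 0 ≤ Y₀ t ∧ 0 ≤ Y₁ t ∧ 0 ≤ Y₂ t ∧ 0 ≤ Y₃ t)
    (hd0 : ∀ t ∈ Ici (0:ℝ), HasDerivAt Y₀
      ((b * (1 - Y₀ t / K) - α₁ * Y₁ t - α₂ * Y₂ t - α₃ * Y₃ t - μ₀) * Y₀ t) t)
    (hd1 : ∀ t ∈ Ici (0:ℝ), HasDerivAt Y₁ ((α₁ * Y₀ t - η₁ * Y₃ t - μ₁) * Y₁ t) t)
    (hd2 : ∀ t ∈ Ici (0:ℝ), HasDerivAt Y₂ ((α₂ * Y₀ t - η₂ * Y₃ t - μ₂) * Y₂ t) t)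
    (hd3 : ∀ t ∈ Ici (0:ℝ), HasDerivAt Y₃
      ((α₃ * Y₀ t + η₁ * Y₁ t + η₂ * Y₂ t - μ₃) * Y₃ t) t) :
    (∀ t ∈ Ici (0:ℝ),
      (b * (1 - Y₀ t / K) - α₁ * Y₁ t - α₂ * Y₂ t - α₃ * Y₃ t - μ₀) * Y₀ t
      + (α₁ * Y₀ t - η₁ * Y₃ t - μ₁) * Y₁ t
      + (α₂ * Y₀ t - η₂ * Y₃ t - μ₂) * Y₂ t
      + (α₃ * Y₀ t + η₁ * Y₁ t + η₂ * Y₂ t - μ₃) * Y₃ t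
      ≤ b * K / 4 - min (min μ₀ μ₁) (min μ₂ μ₃) * (Y₀ t + Y₁ t + Y₂ t + Y₃ t)) ∧
    (∀ t ∈ Ici (0:ℝ),
      Y₀ t + Y₁ t + Y₂ t + Y₃ t
      ≤ max (Y₀ 0 + Y₁ 0 + Y₂ 0 + Y₃ 0) (b * K / (4 * min (min μ₀ μ₁) (min μ₂ μ₃)))) := by
  have hfield : ∀ t ∈ Ici (0:ℝ), _ ≤ _ := fun t ht =>
    let ⟨h₀, h₁, h₂, h₃⟩ := hnn t ht
    coinfection_field_sum_le (α₁ := α₁) (α₂ := α₂) (α₃ := α₃) (η₁ := η₁) (η₂ := η₂)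
      (μ₀ := μ₀) (μ₁ := μ₁) (μ₂ := μ₂) (μ₃ := μ₃) hb.le hK h₀ h₁ h₂ h₃
  have hμ : 0 < min (min μ₀ μ₁) (min μ₂ μ₃) := lt_min (lt_min hμ₀ hμ₁) (lt_min hμ₂ hμ₃)
  have hsum := le_max_of_hasDerivAt_le_sub_mul (f := fun s => Y₀ s + Y₁ s + Y₂ s + Y₃ s) hμ
    (fun t ht => (((hd0 t ht).add (hd1 t ht)).add (hd2 t ht)).add (hd3 t ht)) hfield
  exact ⟨hfield, by simpa only [div_div] using hsum⟩

open Set in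
theorem total_population_bound
    (b K μ₀ μ₁ μ₂ μ₃ α₁ α₂ α₃ η₁ η₂ : ℝ)
    (hb : 0 < b) (hK : 0 < K) (hμ₀ : 0 < μ₀) (hμ₁ : 0 < μ₁) (hμ₂ : 0 < μ₂) (hμ₃ : 0 < μ₃)
    (hα₁ : 0 < α₁) (hα₂ : 0 < α₂) (hα₃ : 0 < α₃) (hη₁ : 0 < η₁) (hη₂ : 0 < η₂)
    (Y₀ Y₁ Y₂ Y₃ : ℝ → ℝ)
    (hnn : ∀ t ∈ Ici (0:ℝ), 0 ≤ Y₀ t ∧ 0 ≤ Y₁ t ∧ 0 ≤ Y₂ t ∧ 0 ≤ Y₃ t)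
    (hd0 : ∀ t ∈ Ici (0:ℝ), HasDerivAt Y₀
      ((b * (1 - Y₀ t / K) - α₁ * Y₁ t - α₂ * Y₂ t - α₃ * Y₃ t - μ₀) * Y₀ t) t)
    (hd1 : ∀ t ∈ Ici (0:ℝ), HasDerivAt Y₁ ((α₁ * Y₀ t - η₁ * Y₃ t - μ₁) * Y₁ t) t)
    (hd2 : ∀ t ∈ Ici (0:ℝ), HasDerivAt Y₂ ((α₂ * Y₀ t - η₂ * Y₃ t - μ₂) * Y₂ t) t)
    (hd3 : ∀ t ∈ Ici (0:ℝ), HasDerivAt Y₃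
      ((α₃ * Y₀ t + η₁ * Y₁ t + η₂ * Y₂ t - μ₃) * Y₃ t) t) :
    (∀ t ∈ Ici (0:ℝ),
      (b * (1 - Y₀ t / K) - α₁ * Y₁ t - α₂ * Y₂ t - α₃ * Y₃ t - μ₀) * Y₀ t
      + (α₁ * Y₀ t - η₁ * Y₃ t - μ₁) * Y₁ t
      + (α₂ * Y₀ t - η₂ * Y₃ t - μ₂) * Y₂ t
      + (α₃ * Y₀ t + η₁ * Y₁ t + η₂ * Y₂ t - μ₃) * Y₃ t
      ≤ b * K / 4 - min (min μ₀ μ₁) (min μ₂ μ₃) * (Y₀ t + Y₁ t + Y₂ t + Y₃ t)) ∧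
    (∀ t ∈ Ici (0:ℝ),
      Y₀ t + Y₁ t + Y₂ t + Y₃ t
      ≤ max (Y₀ 0 + Y₁ 0 + Y₂ 0 + Y₃ 0) (b * K / (4 * min (min μ₀ μ₁) (min μ₂ μ₃)))) :=
  total_population_bound_general b K μ₀ μ₁ μ₂ μ₃ α₁ α₂ α₃ η₁ η₂ hb hK hμ₀ hμ₁ hμ₂ hμ₃ Y₀ Y₁ Y₂ Y₃
    hnn hd0 hd1 hd2 hd3
end

section
/- Let F(Y) = -q + AY be the vector field of the coinfection model with parameters positive and Y* ≥ 0 an equilibrium (Yᵢ*Fᵢ(Y*) = 0 for all i). Define the generalized Volterra function V(y) = Σᵢ (yᵢ - Yᵢ* ln yᵢ) for y ∈ (0,∞)⁴. Then along any solution y(t) of yₖ' = Fₖ(y)yₖ with positive coordinates, d/dt V(y(t)) = -(b/K)(y₀(t) - Y₀*)² + Σᵢ Fᵢ(Y*) yᵢ(t). -/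
/-! Along a solution of `yᵢ' = Fᵢ(y) yᵢ` each term `yᵢ - Yᵢ* log yᵢ` has derivative
`(yᵢ - Yᵢ*) Fᵢ(y)`. Writing `F(y) = F(Y*) + A (y - Y*)`, the sum of these is
`(y - Y*)ᵀ A (y - Y*) + Σᵢ (yᵢ - Yᵢ*) Fᵢ(Y*)`; the quadratic form reduces to `-(b/K)(y₀ - Y₀*)²`
because `A` is skew-symmetric off its `(0,0)` entry, and `Yᵢ* Fᵢ(Y*) = 0` at an equilibrium. -/

theorem hasDerivAt_sub_mul_log_of_hasDerivAt_mul_self {y : ℝ → ℝ} {F Y t : ℝ}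
    (hy : y t ≠ 0) (hd : HasDerivAt y (F * y t) t) :
    HasDerivAt (fun s => y s - Y * Real.log (y s)) ((y t - Y) * F) t := by
  refine (hd.sub ((hd.log hy).const_mul Y)).congr_deriv ?_
  field_simp

open Set in
theorem volterra_function_derivative_general
    (b K μ₀ μ₁ μ₂ μ₃ α₁ α₂ α₃ η₁ η₂ : ℝ)
    -- equilibrium point Y* ≥ 0
    (Y₀' Y₁' Y₂' Y₃' : ℝ)
    (e0 : Y₀' * (b * (1 - Y₀' / K) - α₁ * Y₁' - α₂ * Y₂' - α₃ * Y₃' - μ₀) = 0)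
    (e1 : Y₁' * (α₁ * Y₀' - η₁ * Y₃' - μ₁) = 0)
    (e2 : Y₂' * (α₂ * Y₀' - η₂ * Y₃' - μ₂) = 0)
    (e3 : Y₃' * (α₃ * Y₀' + η₁ * Y₁' + η₂ * Y₂' - μ₃) = 0)
    -- a positive solution of the system
    (y₀ y₁ y₂ y₃ : ℝ → ℝ) (t : ℝ)
    (hpos : 0 < y₀ t ∧ 0 < y₁ t ∧ 0 < y₂ t ∧ 0 < y₃ t)
    (hd0 : HasDerivAt y₀
      ((b * (1 - y₀ t / K) - α₁ * y₁ t - α₂ * y₂ t - α₃ * y₃ t - μ₀) * y₀ t) t)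
    (hd1 : HasDerivAt y₁ ((α₁ * y₀ t - η₁ * y₃ t - μ₁) * y₁ t) t)
    (hd2 : HasDerivAt y₂ ((α₂ * y₀ t - η₂ * y₃ t - μ₂) * y₂ t) t)
    (hd3 : HasDerivAt y₃ ((α₃ * y₀ t + η₁ * y₁ t + η₂ * y₂ t - μ₃) * y₃ t) t) :
    HasDerivAt (fun s =>
        (y₀ s - Y₀' * Real.log (y₀ s)) + (y₁ s - Y₁' * Real.log (y₁ s))
        + (y₂ s - Y₂' * Real.log (y₂ s)) + (y₃ s - Y₃' * Real.log (y₃ s)))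
      (-(b / K) * (y₀ t - Y₀') ^ 2
        + (b * (1 - Y₀' / K) - α₁ * Y₁' - α₂ * Y₂' - α₃ * Y₃' - μ₀) * y₀ t
        + (α₁ * Y₀' - η₁ * Y₃' - μ₁) * y₁ t
        + (α₂ * Y₀' - η₂ * Y₃' - μ₂) * y₂ t
        + (α₃ * Y₀' + η₁ * Y₁' + η₂ * Y₂' - μ₃) * y₃ t) t := by
  obtain ⟨h0, h1, h2, h3⟩ := hpos
  have hV := (((hasDerivAt_sub_mul_log_of_hasDerivAt_mul_self (Y := Y₀') h0.ne' hd0).add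
    (hasDerivAt_sub_mul_log_of_hasDerivAt_mul_self (Y := Y₁') h1.ne' hd1)).add
    (hasDerivAt_sub_mul_log_of_hasDerivAt_mul_self (Y := Y₂') h2.ne' hd2)).add
    (hasDerivAt_sub_mul_log_of_hasDerivAt_mul_self (Y := Y₃') h3.ne' hd3)
  refine hV.congr_deriv ?_
  linear_combination -(e0 + e1 + e2 + e3)

open Set in
theorem volterra_function_derivative
    (b K μ₀ μ₁ μ₂ μ₃ α₁ α₂ α₃ η₁ η₂ : ℝ)
    (hb : 0 < b) (hK : 0 < K) (hμ₀ : 0 < μ₀) (hμ₁ : 0 < μ₁) (hμ₂ : 0 < μ₂) (hμ₃ : 0 < μ₃)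
    (hα₁ : 0 < α₁) (hα₂ : 0 < α₂) (hα₃ : 0 < α₃) (hη₁ : 0 < η₁) (hη₂ : 0 < η₂)
    -- equilibrium point Y* ≥ 0
    (Y₀' Y₁' Y₂' Y₃' : ℝ)
    (hY0 : 0 ≤ Y₀') (hY1 : 0 ≤ Y₁') (hY2 : 0 ≤ Y₂') (hY3 : 0 ≤ Y₃')
    (e0 : Y₀' * (b * (1 - Y₀' / K) - α₁ * Y₁' - α₂ * Y₂' - α₃ * Y₃' - μ₀) = 0)
    (e1 : Y₁' * (α₁ * Y₀' - η₁ * Y₃' - μ₁) = 0)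
    (e2 : Y₂' * (α₂ * Y₀' - η₂ * Y₃' - μ₂) = 0)
    (e3 : Y₃' * (α₃ * Y₀' + η₁ * Y₁' + η₂ * Y₂' - μ₃) = 0)
    -- a positive solution of the system
    (y₀ y₁ y₂ y₃ : ℝ → ℝ) (t : ℝ)
    (hpos : 0 < y₀ t ∧ 0 < y₁ t ∧ 0 < y₂ t ∧ 0 < y₃ t)
    (hd0 : HasDerivAt y₀
      ((b * (1 - y₀ t / K) - α₁ * y₁ t - α₂ * y₂ t - α₃ * y₃ t - μ₀) * y₀ t) t)
    (hd1 : HasDerivAt y₁ ((α₁ * y₀ t - η₁ * y₃ t - μ₁) * y₁ t) t)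
    (hd2 : HasDerivAt y₂ ((α₂ * y₀ t - η₂ * y₃ t - μ₂) * y₂ t) t)
    (hd3 : HasDerivAt y₃ ((α₃ * y₀ t + η₁ * y₁ t + η₂ * y₂ t - μ₃) * y₃ t) t) :
    HasDerivAt (fun s =>
        (y₀ s - Y₀' * Real.log (y₀ s)) + (y₁ s - Y₁' * Real.log (y₁ s))
        + (y₂ s - Y₂' * Real.log (y₂ s)) + (y₃ s - Y₃' * Real.log (y₃ s)))
      (-(b / K) * (y₀ t - Y₀') ^ 2
        + (b * (1 - Y₀' / K) - α₁ * Y₁' - α₂ * Y₂' - α₃ * Y₃' - μ₀) * y₀ t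
        + (α₁ * Y₀' - η₁ * Y₃' - μ₁) * y₁ t
        + (α₂ * Y₀' - η₂ * Y₃' - μ₂) * y₂ t
        + (α₃ * Y₀' + η₁ * Y₁' + η₂ * Y₂' - μ₃) * y₃ t) t :=
  volterra_function_derivative_general b K μ₀ μ₁ μ₂ μ₃ α₁ α₂ α₃ η₁ η₂ Y₀' Y₁' Y₂' Y₃' e0 e1 e2 e3 y₀
    y₁ y₂ y₃ t hpos hd0 hd1 hd2 hd3
end

section
/- For the coinfection model with all parameters positive, b > μ₀, and σ₁ < σ₂ < σ₃, the disease-free equilibrium E₂ = (S₂, 0, 0, 0) with S₂ = K(1 - μ₀/b) is F-stable if and only if S₂ ≤ σ₁. -/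
/-! S₂ is the equilibrium of the logistic growth `b (1 - Y₀/K) - μ₀`, so F₀ vanishes at E₂, and
for `i ≥ 1` the sign of `Fᵢ(E₂) = αᵢ S₂ - μᵢ` is that of `S₂ - μᵢ/αᵢ`. Since the thresholds
`μᵢ/αᵢ` increase with `i`, only the first one is binding. -/

section

variable {𝕜 : Type*} [Field 𝕜] [LinearOrder 𝕜] [IsStrictOrderedRing 𝕜]

theorem mul_sub_nonpos_iff_le_div {a x c : 𝕜} (ha : 0 < a) : a * x - c ≤ 0 ↔ x ≤ c / a := by
  rw [sub_nonpos, le_div_iff₀ ha, mul_comm]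

theorem mul_one_sub_div_nonneg {K μ b : 𝕜} (hK : 0 ≤ K) (hb : 0 < b) (hμb : μ ≤ b) :
    0 ≤ K * (1 - μ / b) :=
  mul_nonneg hK (sub_nonneg.mpr ((div_le_one hb).mpr hμb))

end

theorem logistic_growth_at_equilibrium {F : Type*} [Field F] {b K μ : F} (hb : b ≠ 0)
    (hK : K ≠ 0) : b * (1 - K * (1 - μ / b) / K) - μ = 0 := by
  field_simp
  ring

theorem E2_F_stable_iff_general
    (b K μ₀ μ₁ μ₂ μ₃ α₁ α₂ α₃ η₁ η₂ : ℝ)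
    (hb : 0 < b) (hK : 0 < K)
    (hα₁ : 0 < α₁) (hα₂ : 0 < α₂) (hα₃ : 0 < α₃)
    (hbμ : μ₀ < b)
    (h12 : μ₁ / α₁ < μ₂ / α₂) (h23 : μ₂ / α₂ < μ₃ / α₃) :
    ((0 ≤ K * (1 - μ₀ / b) ∧ 0 ≤ (0:ℝ) ∧ 0 ≤ (0:ℝ) ∧ 0 ≤ (0:ℝ)) ∧
     b * (1 - (K * (1 - μ₀ / b)) / K) - α₁ * 0 - α₂ * 0 - α₃ * 0 - μ₀ ≤ 0 ∧
     α₁ * (K * (1 - μ₀ / b)) - η₁ * 0 - μ₁ ≤ 0 ∧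
     α₂ * (K * (1 - μ₀ / b)) - η₂ * 0 - μ₂ ≤ 0 ∧
     α₃ * (K * (1 - μ₀ / b)) + η₁ * 0 + η₂ * 0 - μ₃ ≤ 0)
    ↔ K * (1 - μ₀ / b) ≤ μ₁ / α₁ := by
  have hS₂ : 0 ≤ K * (1 - μ₀ / b) := mul_one_sub_div_nonneg hK.le hb hbμ.le
  simp only [mul_zero, sub_zero, add_zero, le_refl, and_true, hS₂, true_and,
    logistic_growth_at_equilibrium hb.ne' hK.ne', mul_sub_nonpos_iff_le_div hα₁,
    mul_sub_nonpos_iff_le_div hα₂, mul_sub_nonpos_iff_le_div hα₃]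
  exact ⟨fun h ↦ h.1, fun h ↦ ⟨h, h.trans h12.le, h.trans (h12.trans h23).le⟩⟩

theorem E2_F_stable_iff
    (b K μ₀ μ₁ μ₂ μ₃ α₁ α₂ α₃ η₁ η₂ : ℝ)
    (hb : 0 < b) (hK : 0 < K) (hμ₀ : 0 < μ₀) (hμ₁ : 0 < μ₁) (hμ₂ : 0 < μ₂) (hμ₃ : 0 < μ₃)
    (hα₁ : 0 < α₁) (hα₂ : 0 < α₂) (hα₃ : 0 < α₃) (hη₁ : 0 < η₁) (hη₂ : 0 < η₂)
    (hbμ : μ₀ < b)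
    (h12 : μ₁ / α₁ < μ₂ / α₂) (h23 : μ₂ / α₂ < μ₃ / α₃) :
    ((0 ≤ K * (1 - μ₀ / b) ∧ 0 ≤ (0:ℝ) ∧ 0 ≤ (0:ℝ) ∧ 0 ≤ (0:ℝ)) ∧
     b * (1 - (K * (1 - μ₀ / b)) / K) - α₁ * 0 - α₂ * 0 - α₃ * 0 - μ₀ ≤ 0 ∧
     α₁ * (K * (1 - μ₀ / b)) - η₁ * 0 - μ₁ ≤ 0 ∧
     α₂ * (K * (1 - μ₀ / b)) - η₂ * 0 - μ₂ ≤ 0 ∧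
     α₃ * (K * (1 - μ₀ / b)) + η₁ * 0 + η₂ * 0 - μ₃ ≤ 0)
    ↔ K * (1 - μ₀ / b) ≤ μ₁ / α₁ :=
  E2_F_stable_iff_general b K μ₀ μ₁ μ₂ μ₃ α₁ α₂ α₃ η₁ η₂ hb hK hα₁ hα₂ hα₃ hbμ h12 h23
end
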